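/- Let m = (σ,S) ∈ PM*(n₁,…,n_k), let e_i be a convertible homogeneous edge of m, and let m' = (σ, S △ {i}) (toggle the mark of e_i). Then wt(m') + cross(m') = wt(m) + cross(m). -/
import Mathlib


open scoped Classical
open Finset

noncomputable section

/-! Permutation statistics -/

/-- Number of weak excedances of a permutation. -/
def wexs {n : ℕ} (σ : Equiv.Perm (Fin n)) : ℕ :=
  (univ.filter fun i : Fin n => i ≤ σ i).card

/-- Number of crossings of a permutation. -/
def CRs {n : ℕ} (σ : Equiv.Perm (Fin n)) : ℕ :=
  (univ.filter fun p : Fin n × Fin n =>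
    (p.1 < p.2 ∧ p.2 ≤ σ p.1 ∧ σ p.1 < σ p.2) ∨
    (σ p.1 < σ p.2 ∧ σ p.2 < p.1 ∧ p.1 < p.2)).card

/-- The weight of a permutation. -/
def wts {n : ℕ} (σ : Equiv.Perm (Fin n)) : ℕ :=
  ∑ i : Fin n, if (i : ℕ) ≤ (σ i : ℕ) then (σ i : ℕ) - (i : ℕ) else (i : ℕ) - (σ i : ℕ) - 1

/-- The number of inversions (pairs of crossing edges) of a permutation. -/
def crossInv {n : ℕ} (σ : Equiv.Perm (Fin n)) : ℕ :=
  (univ.filter fun p : Fin n × Fin n => p.1 < p.2 ∧ σ p.2 < σ p.1).card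

/-! q-Laguerre polynomials over R = ℤ[q,y] -/

abbrev Rqy : Type := MvPolynomial (Fin 2) ℤ

def qv : Rqy := MvPolynomial.X 0
def yv : Rqy := MvPolynomial.X 1

/-- The q-integer [n]_q = 1 + q + ⋯ + q^(n-1). -/
def qint (n : ℕ) : Rqy := ∑ i ∈ range n, qv ^ i

/-- The q-Laguerre polynomials. -/
def Lag : ℕ → Polynomial Rqy
  | 0 => 1
  | 1 => Polynomial.X - Polynomial.C yv
  | (n + 2) =>
      (Polynomial.X - Polynomial.C (yv * qint (n + 2) + qint (n + 1))) * Lag (n + 1)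
        - Polynomial.C (yv * (qint (n + 1)) ^ 2) * Lag n

/-- The n-th moment. -/
def mu (n : ℕ) : Rqy := ∑ σ : Equiv.Perm (Fin n), yv ^ wexs σ * qv ^ CRs σ

/-- The linear functional 𝓛 with 𝓛(xⁿ) = μₙ. -/
def LL (p : Polynomial Rqy) : Rqy := p.sum fun n c => c * mu n

/-! Blocks / homogeneity -/

/-- Offset of the r-th block (0-based). -/
def off {k : ℕ} (n : Fin k → ℕ) (r : Fin k) : ℕ := ∑ s : Fin k, if s < r then n s else 0

/-- The edge (i, σ i) is homogeneous with respect to the composition n. -/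
def HomEdge {k N : ℕ} (n : Fin k → ℕ) (σ : Equiv.Perm (Fin N)) (i : Fin N) : Prop :=
  ∃ r : Fin k, off n r ≤ (i : ℕ) ∧ (i : ℕ) < off n r + n r ∧
    off n r ≤ (σ i : ℕ) ∧ (σ i : ℕ) < off n r + n r

/-! Matchings -/

/-- A matching of degree n: a partial injective assignment of lower vertices to
upper vertices. -/
def Matching (n : ℕ) : Type :=
  {f : Fin n → Option (Fin n) // ∀ i j a, f i = some a → f j = some a → i = j}

instance (n : ℕ) : Fintype (Matching n) := Subtype.fintype _

/-- Number of edges of a matching. -/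
def eM {n : ℕ} (π : Matching n) : ℕ := (univ.filter fun i => (π.1 i).isSome).card

/-- Lower vertex j is unmatched. -/
def unmatchedLower {n : ℕ} (π : Matching n) (j : Fin n) : Prop := ∀ i, π.1 i ≠ some j

/-- Upper block index. -/
def bindUM {n : ℕ} (π : Matching n) (i : Fin n) : ℕ :=
  1 + (univ.filter fun i' => i' < i ∧ π.1 i' = none).card

/-- Lower block index. -/
def bindLM {n : ℕ} (π : Matching n) (j : Fin n) : ℕ :=
  1 + (univ.filter fun j' => j' < j ∧ unmatchedLower π j').card

/-- Block difference of the edge at upper vertex i (only meaningful when i is matched). -/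
def bdiffM {n : ℕ} (π : Matching n) (i : Fin n) : ℤ :=
  (bindLM π ((π.1 i).getD i) : ℤ) - (bindUM π i : ℤ)

/-- Number of block weak excedances. -/
def bwexM {n : ℕ} (π : Matching n) : ℕ :=
  (univ.filter fun i => (π.1 i).isSome ∧ 0 ≤ bdiffM π i).card

/-- The block weight. -/
def bwtM {n : ℕ} (π : Matching n) : ℕ :=
  (∑ i ∈ univ.filter (fun i => (π.1 i).isSome),
    if 0 ≤ bdiffM π i then bdiffM π i else -bdiffM π i - 1).toNat

/-- Number of crossings of a matching. -/
def crossM {n : ℕ} (π : Matching n) : ℕ :=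
  (univ.filter fun p : Fin n × Fin n => p.1 < p.2 ∧
    ∃ a b, π.1 p.1 = some a ∧ π.1 p.2 = some b ∧ b < a).card

/-- Edge (i,a) is homogeneous with respect to n. -/
def HomIdx {k N : ℕ} (n : Fin k → ℕ) (i a : Fin N) : Prop :=
  ∃ r : Fin k, off n r ≤ (i : ℕ) ∧ (i : ℕ) < off n r + n r ∧
    off n r ≤ (a : ℕ) ∧ (a : ℕ) < off n r + n r

/-! Marked perfect matchings -/

/-- S is a valid set of marked edges: it contains every inhomogeneous edge. -/
def ValidMark {k N : ℕ} (n : Fin k → ℕ) (σ : Equiv.Perm (Fin N)) (S : Finset (Fin N)) : Prop :=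
  ∀ i, ¬ HomEdge n σ i → i ∈ S

/-- Upper block index of a marked perfect matching. -/
def bindU {N : ℕ} (S : Finset (Fin N)) (i : Fin N) : ℕ :=
  1 + (S.filter fun j => j < i).card

/-- Lower block index of a marked perfect matching. -/
def bindL {N : ℕ} (σ : Equiv.Perm (Fin N)) (S : Finset (Fin N)) (l : Fin N) : ℕ :=
  1 + (S.filter fun j => σ j < l).card

/-- Block difference of the edge e_i. -/
def bdiff {N : ℕ} (σ : Equiv.Perm (Fin N)) (S : Finset (Fin N)) (i : Fin N) : ℤ :=
  (bindL σ S (σ i) : ℤ) - (bindU S i : ℤ)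

/-- Number of unmarked edges. -/
def eem {N : ℕ} (S : Finset (Fin N)) : ℕ := N - S.card

/-- Number of block weak excedances of a marked perfect matching. -/
def bwexm {N : ℕ} (σ : Equiv.Perm (Fin N)) (S : Finset (Fin N)) : ℕ :=
  (univ.filter fun i => 0 ≤ bdiff σ S i).card

/-- The weight of a marked perfect matching. -/
def wtm {N : ℕ} (σ : Equiv.Perm (Fin N)) (S : Finset (Fin N)) : ℕ :=
  (∑ i : Fin N, if 0 ≤ bdiff σ S i then bdiff σ S i else -bdiff σ S i - 1).toNat

/-- The (signed) crossing number of a marked perfect matching. -/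
def crossm {N : ℕ} (σ : Equiv.Perm (Fin N)) (S : Finset (Fin N)) : ℤ :=
  ((univ.filter fun p : Fin N × Fin N =>
      p.1 < p.2 ∧ σ p.2 < σ p.1 ∧ p.1 ∉ S ∧ p.2 ∉ S).card : ℤ)
  - ((univ.filter fun p : Fin N × Fin N =>
      p.1 < p.2 ∧ σ p.2 < σ p.1 ∧ p.1 ∈ S ∧ p.2 ∈ S).card : ℤ)

/-- The edge e_j crosses the edge e_i from the left. -/
def CrossLeft {N : ℕ} (σ : Equiv.Perm (Fin N)) (j i : Fin N) : Prop :=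
  j < i ∧ σ i < σ j

/-- The homogeneous edge e_i is convertible in (σ, S). -/
def Convertible {N : ℕ} (σ : Equiv.Perm (Fin N)) (S : Finset (Fin N)) (i : Fin N) : Prop :=
  if i ∈ S then
    (∀ j, CrossLeft σ j i → 0 < bdiff σ S j) ∧ (∀ j, CrossLeft σ i j → bdiff σ S j < -1)
  else
    (∀ j, CrossLeft σ j i → 0 ≤ bdiff σ S j) ∧ (∀ j, CrossLeft σ i j → bdiff σ S j ≤ -1)

/-- Toggle the mark on edge i. -/
def toggle {N : ℕ} (S : Finset (Fin N)) (i : Fin N) : Finset (Fin N) :=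
  if i ∈ S then S.erase i else insert i S

end

section AuxLemmas

variable {N : ℕ}

lemma mem_insert_indicator (S : Finset (Fin N)) (i : Fin N) (hi : i ∉ S) (x : Fin N) :
    (if x ∈ insert i S then (1:ℤ) else 0) =
      (if x ∈ S then 1 else 0) + (if x = i then 1 else 0) := by
  by_cases hx : x = i
  · subst hx; simp [hi]
  · simp [Finset.mem_insert, hx]

lemma bindU_insert (S : Finset (Fin N)) (i : Fin N) (hi : i ∉ S) (j : Fin N) :
    bindU (insert i S) j = bindU S j + (if i < j then 1 else 0) := by
  unfold bindU
  rw [Finset.filter_insert]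
  split_ifs with h
  · rw [Finset.card_insert_of_notMem (fun hc => hi (Finset.mem_of_mem_filter i hc))]
    omega
  · omega

lemma bindL_insert (σ : Equiv.Perm (Fin N)) (S : Finset (Fin N)) (i : Fin N) (hi : i ∉ S)
    (l : Fin N) :
    bindL σ (insert i S) l = bindL σ S l + (if σ i < l then 1 else 0) := by
  unfold bindL
  rw [Finset.filter_insert]
  split_ifs with h
  · rw [Finset.card_insert_of_notMem (fun hc => hi (Finset.mem_of_mem_filter i hc))]
    omega
  · omega

lemma bdiff_insert (σ : Equiv.Perm (Fin N)) (S : Finset (Fin N)) (i : Fin N) (hi : i ∉ S)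
    (j : Fin N) :
    bdiff σ (insert i S) j =
      bdiff σ S j + (if σ i < σ j then 1 else 0) - (if i < j then 1 else 0) := by
  unfold bdiff
  rw [bindU_insert S i hi j, bindL_insert σ S i hi (σ j)]
  split_ifs <;> push_cast <;> ring

lemma wtm_int (σ : Equiv.Perm (Fin N)) (S : Finset (Fin N)) :
    (wtm σ S : ℤ) =
      ∑ j : Fin N, (if 0 ≤ bdiff σ S j then bdiff σ S j else -bdiff σ S j - 1) := by
  unfold wtm
  rw [Int.toNat_of_nonneg]
  exact Finset.sum_nonneg fun j _ => by split_ifs <;> omega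

lemma crossm_sum (σ : Equiv.Perm (Fin N)) (S : Finset (Fin N)) :
    crossm σ S =
      ∑ p : Fin N × Fin N, (if p.1 < p.2 ∧ σ p.2 < σ p.1 then
        1 - (if p.1 ∈ S then (1:ℤ) else 0) - (if p.2 ∈ S then 1 else 0) else 0) := by
  unfold crossm
  rw [Finset.card_filter, Finset.card_filter]
  push_cast
  rw [← Finset.sum_sub_distrib]
  refine Finset.sum_congr rfl fun p _ => ?_
  by_cases h : p.1 < p.2 ∧ σ p.2 < σ p.1 <;> by_cases h1 : p.1 ∈ S <;> by_cases h2 : p.2 ∈ S <;>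
    simp [h, h1, h2]

lemma key_insert (σ : Equiv.Perm (Fin N)) (S : Finset (Fin N)) (i : Fin N) (hi : i ∉ S)
    (hL : ∀ j, j < i → σ i < σ j → 0 ≤ bdiff σ S j)
    (hR : ∀ j, i < j → σ j < σ i → bdiff σ S j ≤ -1) :
    (wtm σ (insert i S) : ℤ) + crossm σ (insert i S) = (wtm σ S : ℤ) + crossm σ S := by
  rw [wtm_int, wtm_int, crossm_sum, crossm_sum]
  have hwt : ∀ j : Fin N,
      (if 0 ≤ bdiff σ (insert i S) j then bdiff σ (insert i S) j
        else -bdiff σ (insert i S) j - 1)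
      = (if 0 ≤ bdiff σ S j then bdiff σ S j else -bdiff σ S j - 1)
        + ((if j < i ∧ σ i < σ j then 1 else 0) + (if i < j ∧ σ j < σ i then 1 else 0)) := by
    intro j
    rw [bdiff_insert σ S i hi j]
    rcases lt_trichotomy j i with h | h | h
    · have hij : ¬ i < j := asymm h
      by_cases hσ : σ i < σ j
      · have hd := hL j h hσ
        have c1 : (if j < i ∧ σ i < σ j then (1:ℤ) else 0) = 1 := if_pos ⟨h, hσ⟩
        have c2 : (if i < j ∧ σ j < σ i then (1:ℤ) else 0) = 0 := if_neg (fun hc => hij hc.1)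
        rw [if_pos hσ, if_neg hij, c1, c2]
        split_ifs <;> omega
      · have c1 : (if j < i ∧ σ i < σ j then (1:ℤ) else 0) = 0 := if_neg (fun hc => hσ hc.2)
        have c2 : (if i < j ∧ σ j < σ i then (1:ℤ) else 0) = 0 := if_neg (fun hc => hij hc.1)
        rw [if_neg hσ, if_neg hij, c1, c2]
        split_ifs <;> omega
    · subst h
      simp
    · have hij : ¬ j < i := asymm h
      by_cases hσ : σ j < σ i
      · have hd := hR j h hσ
        have c1 : (if j < i ∧ σ i < σ j then (1:ℤ) else 0) = 0 := if_neg (fun hc => hij hc.1)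
        have c2 : (if i < j ∧ σ j < σ i then (1:ℤ) else 0) = 1 := if_pos ⟨h, hσ⟩
        rw [if_neg (asymm hσ), if_pos h, c1, c2]
        split_ifs <;> omega
      · have hne : σ i ≠ σ j := fun he => (ne_of_lt h) (σ.injective he)
        have hσ' : σ i < σ j := lt_of_le_of_ne (not_lt.1 hσ) hne
        have c1 : (if j < i ∧ σ i < σ j then (1:ℤ) else 0) = 0 := if_neg (fun hc => hij hc.1)
        have c2 : (if i < j ∧ σ j < σ i then (1:ℤ) else 0) = 0 := if_neg (fun hc => hσ hc.2)
        rw [if_pos hσ', if_pos h, c1, c2]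
        split_ifs <;> omega
  have hG : ∀ p : Fin N × Fin N,
      (if p.1 < p.2 ∧ σ p.2 < σ p.1 then
        1 - (if p.1 ∈ insert i S then (1:ℤ) else 0) - (if p.2 ∈ insert i S then 1 else 0) else 0)
      = (if p.1 < p.2 ∧ σ p.2 < σ p.1 then
          1 - (if p.1 ∈ S then (1:ℤ) else 0) - (if p.2 ∈ S then 1 else 0) else 0)
        - ((if p.1 = i then (if i < p.2 ∧ σ p.2 < σ i then (1:ℤ) else 0) else 0)
           + (if p.2 = i then (if p.1 < i ∧ σ i < σ p.1 then (1:ℤ) else 0) else 0)) := by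
    intro p
    obtain ⟨a, b⟩ := p
    dsimp only
    rw [mem_insert_indicator S i hi a, mem_insert_indicator S i hi b]
    by_cases h1 : a = i
    · subst h1
      by_cases h : a < b ∧ σ b < σ a
      · have h2 : ¬ b = a := fun hc => lt_irrefl a (hc ▸ h.1)
        simp only [if_pos h, if_pos rfl, if_neg h2, if_true]
        ring
      · by_cases h2 : b = a
        · subst h2
          simp only [if_neg h, if_pos rfl, if_true]
          ring
        · simp only [if_neg h, if_pos rfl, if_neg h2, if_true]
          ring
    · by_cases h2 : b = i
      · subst h2
        by_cases h : a < b ∧ σ b < σ a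
        · simp only [if_pos h, if_pos rfl, if_neg h1, if_true]
          ring
        · simp only [if_neg h, if_pos rfl, if_neg h1, if_true]
          ring
      · by_cases h : a < b ∧ σ b < σ a
        · simp only [if_pos h, if_neg h1, if_neg h2]
          ring
        · simp only [if_neg h, if_neg h1, if_neg h2]
          ring
  rw [Finset.sum_congr rfl fun j _ => hwt j, Finset.sum_congr rfl fun p _ => hG p,
    Finset.sum_add_distrib, Finset.sum_sub_distrib, Finset.sum_add_distrib,
    Finset.sum_add_distrib]
  have e1 : (∑ p : Fin N × Fin N,
      (if p.1 = i then (if i < p.2 ∧ σ p.2 < σ i then (1:ℤ) else 0) else 0))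
      = ∑ j : Fin N, (if i < j ∧ σ j < σ i then (1:ℤ) else 0) := by
    rw [Fintype.sum_prod_type]
    have : ∀ a : Fin N, (∑ b : Fin N,
        (if a = i then (if i < b ∧ σ b < σ i then (1:ℤ) else 0) else 0))
        = if a = i then (∑ b : Fin N, (if i < b ∧ σ b < σ i then (1:ℤ) else 0)) else 0 := by
      intro a
      split_ifs with ha <;> simp [ha]
    rw [Finset.sum_congr rfl fun a _ => this a, Finset.sum_ite_eq' Finset.univ i]
    simp
  have e2 : (∑ p : Fin N × Fin N,
      (if p.2 = i then (if p.1 < i ∧ σ i < σ p.1 then (1:ℤ) else 0) else 0))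
      = ∑ j : Fin N, (if j < i ∧ σ i < σ j then (1:ℤ) else 0) := by
    rw [Fintype.sum_prod_type]
    refine Finset.sum_congr rfl fun a _ => ?_
    rw [Finset.sum_ite_eq' Finset.univ i]
    simp
  rw [e1, e2]
  ring

end AuxLemmas

/-- Lemma 4.8: toggling the mark of a convertible homogeneous
edge preserves wt + cross. -/
theorem wt_add_cross_toggle_convertible {k N : ℕ} (n : Fin k → ℕ)
    (hn : ∀ r, 0 < n r) (hN : N = ∑ r, n r)
    (σ : Equiv.Perm (Fin N)) (S : Finset (Fin N)) (hS : ValidMark n σ S)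
    (i : Fin N) (hih : HomEdge n σ i) (hc : Convertible σ S i) :
    (wtm σ (toggle S i) : ℤ) + crossm σ (toggle S i) = (wtm σ S : ℤ) + crossm σ S := by
  by_cases hmem : i ∈ S
  · rw [Convertible, if_pos hmem] at hc
    obtain ⟨hL, hR⟩ := hc
    have hi' : i ∉ S.erase i := Finset.notMem_erase i S
    have hins : insert i (S.erase i) = S := Finset.insert_erase hmem
    rw [toggle, if_pos hmem]
    have hL' : ∀ j, j < i → σ i < σ j → 0 ≤ bdiff σ (S.erase i) j := by
      intro j hj hσ
      have h1 : 0 < bdiff σ S j := hL j ⟨hj, hσ⟩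
      have h2 := bdiff_insert σ (S.erase i) i hi' j
      rw [hins, if_pos hσ, if_neg (asymm hj)] at h2
      omega
    have hR' : ∀ j, i < j → σ j < σ i → bdiff σ (S.erase i) j ≤ -1 := by
      intro j hj hσ
      have h1 : bdiff σ S j < -1 := hR j ⟨hj, hσ⟩
      have h2 := bdiff_insert σ (S.erase i) i hi' j
      rw [hins, if_neg (asymm hσ), if_pos hj] at h2
      omega
    have := key_insert σ (S.erase i) i hi' hL' hR'
    rw [hins] at this
    exact this.symm
  · rw [Convertible, if_neg hmem] at hc
    obtain ⟨hL, hR⟩ := hc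
    rw [toggle, if_neg hmem]
    exact key_insert σ S i hmem (fun j hj hσ => hL j ⟨hj, hσ⟩) (fun j hj hσ => hR j ⟨hj, hσ⟩)
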